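/- arXiv:2501.00150 — 5 statements merged into one kernel-verified Lean document; each statement's English description precedes it below -/
import Mathlib

section
/- For a convex function f on a simplex S ⊂ ℝ^d with vertices x_0, x_1, …, x_d, the value of f at the barycenter is at most the average of f over S, which is at most the average of the vertex values: f((1/(d+1))·Σ_{i=0}^{d} x_i) ≤ (1/vol(S))·∫_S f(x) dx ≤ (1/(d+1))·Σ_{i=0}^{d} f(x_i). -/
/-!
Relabelling the vertices of the simplex `S` by a permutation `σ` is an affine automorphism of `S`;
since it maps `S` (of positive finite volume) onto itself, its determinant has absolute value `1`,
so it preserves Lebesgue measure. Transporting the barycentric coordinate `λ i` by a transposition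
shows that all `∫_S λ i` are equal, hence equal to `vol S / (d + 1)` since `∑ i, λ i = 1`.

The upper bound integrates the pointwise Jensen inequality `f y ≤ ∑ i, λ i y * f (x i)`.
For the lower bound, the barycenter is the average of the images of any `y ∈ S` under the `d + 1`
cyclic relabellings, so `f (barycenter)` is at most the average of `f` at these images; integrating
over `S` and using that the relabellings preserve measure gives `vol S * f (barycenter) ≤ ∫_S f`.
-/

open MeasureTheory Finset

namespace AffineBasis

variable {ι k : Type*} [Fintype ι] [Ring k]

section AffineSpace

variable {V P : Type*} [AddCommGroup V] [Module k V] [AddTorsor V P] (b : AffineBasis ι k P)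

noncomputable def permMap (σ : Equiv.Perm ι) : P →ᵃ[k] P :=
  (univ.affineCombination k (b ∘ σ)).comp b.coords

theorem coord_permMap (σ : Equiv.Perm ι) (j : ι) (p : P) :
    b.coord j (b.permMap σ p) = b.coord (σ.symm j) p := by
  have h := (b.reindex σ.symm).coord_apply_combination_of_mem (mem_univ (σ.symm j))
    (b.sum_coord_apply_eq_one p)
  rwa [coord_reindex, Equiv.symm_symm, Equiv.apply_symm_apply] at h

theorem permMap_mul (σ τ : Equiv.Perm ι) (p : P) :
    b.permMap σ (b.permMap τ p) = b.permMap (σ * τ) p :=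
  b.ext_elem fun j => by rw [coord_permMap, coord_permMap, coord_permMap]; rfl

theorem permMap_one (p : P) : b.permMap 1 p = p :=
  b.ext_elem fun j => by rw [coord_permMap]; rfl

theorem bijective_permMap (σ : Equiv.Perm ι) : Function.Bijective (b.permMap σ) := by
  refine Function.bijective_iff_has_inverse.mpr ⟨b.permMap σ⁻¹, fun p => ?_, fun p => ?_⟩ <;>
    simp [permMap_mul, permMap_one]

noncomputable def permEquiv (σ : Equiv.Perm ι) : P ≃ᵃ[k] P :=
  AffineEquiv.ofBijective (b.bijective_permMap σ)

theorem coord_permEquiv (σ : Equiv.Perm ι) (j : ι) (p : P) :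
    b.coord j (b.permEquiv σ p) = b.coord (σ.symm j) p :=
  b.coord_permMap σ j p

theorem permEquiv_apply_self (σ : Equiv.Perm ι) (i : ι) : b.permEquiv σ (b i) = b (σ i) := by
  classical
  refine b.ext_elem fun j => ?_
  simp only [coord_permEquiv, coord_apply, Equiv.symm_apply_eq]

end AffineSpace

section Module

variable {E : Type*} [AddCommGroup E] [Module k E] (b : AffineBasis ι k E)

theorem permEquiv_apply_eq_sum (σ : Equiv.Perm ι) (y : E) :
    b.permEquiv σ y = ∑ j, b.coord j y • b (σ j) :=
  univ.affineCombination_eq_linear_combination _ _ (b.sum_coord_apply_eq_one y)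

theorem sum_permEquiv_addLeft [AddGroup ι] (y : E) :
    ∑ i, b.permEquiv (Equiv.addLeft i) y = ∑ i, b i := by
  simp_rw [permEquiv_apply_eq_sum, Equiv.coe_addLeft]
  rw [sum_comm]
  calc ∑ j, ∑ i, b.coord j y • b (i + j) = ∑ j, b.coord j y • ∑ i, b i := by
        refine sum_congr rfl fun j _ => ?_
        rw [← smul_sum]
        exact congrArg _ (Equiv.sum_comp (Equiv.addRight j) b)
    _ = ∑ i, b i := by rw [← sum_smul, b.sum_coord_apply_eq_one, one_smul]

end Module

section Convex

variable {E : Type*} [AddCommGroup E] [Module ℝ E] (b : AffineBasis ι ℝ E)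

theorem image_permEquiv_convexHull (σ : Equiv.Perm ι) :
    b.permEquiv σ '' convexHull ℝ (Set.range b) = convexHull ℝ (Set.range b) := by
  have h : (b.permEquiv σ).toAffineMap ∘ b = b ∘ σ := funext (b.permEquiv_apply_self σ)
  rw [← AffineEquiv.coe_toAffineMap, AffineMap.image_convexHull, ← Set.range_comp, h,
    Set.range_comp, σ.range_eq_univ, Set.image_univ]

theorem le_sum_coord_mul_of_convexOn {f : E → ℝ} (hf : ConvexOn ℝ (convexHull ℝ (Set.range b)) f)
    {y : E} (hy : y ∈ convexHull ℝ (Set.range b)) : f y ≤ ∑ i, b.coord i y * f (b i) := by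
  rw [b.convexHull_eq_nonneg_coord] at hy
  have h := hf.map_sum_le (t := univ) (fun i _ => hy i) (b.sum_coord_apply_eq_one y)
    (fun i _ => subset_convexHull ℝ _ (Set.mem_range_self i))
  rwa [b.linear_combination_coord_eq_self] at h

end Convex

end AffineBasis

section Haar

variable {E : Type*} [NormedAddCommGroup E] [NormedSpace ℝ E] [MeasurableSpace E] [BorelSpace E]
  [FiniteDimensional ℝ E] (μ : Measure E) [μ.IsAddHaarMeasure]

theorem AffineEquiv.measurePreserving_of_image_eq (T : E ≃ᵃ[ℝ] E) {s : Set E} (h0 : μ s ≠ 0)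
    (htop : μ s ≠ ⊤) (hs : T '' s = s) : MeasurePreserving T μ μ := by
  have hT : ⇑T = (T 0 + ·) ∘ (T.linear : E →ₗ[ℝ] E) :=
    funext fun y => by simpa [add_comm] using T.map_vadd 0 y
  have hdet : |LinearMap.det (T.linear : E →ₗ[ℝ] E)| = 1 := by
    have h := congrArg μ hs
    rw [hT, Set.image_comp, Set.image_add_left, measure_preimage_add,
      Measure.addHaar_image_linearMap] at h
    rwa [ENNReal.mul_eq_right h0 htop, ENNReal.ofReal_eq_one] at h
  have hdet0 : LinearMap.det (T.linear : E →ₗ[ℝ] E) ≠ 0 := by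
    intro h; simp [h] at hdet
  refine ⟨T.continuous_of_finiteDimensional.measurable, ?_⟩
  rw [hT, ← Measure.map_map (measurable_const_add _)
      (T.linear : E →ₗ[ℝ] E).continuous_of_finiteDimensional.measurable,
    Measure.map_linearMap_addHaar_eq_smul_addHaar μ hdet0, abs_inv, hdet, inv_one,
    ENNReal.ofReal_one, one_smul, Measure.IsAddLeftInvariant.map_add_left_eq_self]

theorem AffineEquiv.setIntegral_comp_of_image_eq (T : E ≃ᵃ[ℝ] E) {s : Set E} (h0 : μ s ≠ 0)
    (htop : μ s ≠ ⊤) (hs : T '' s = s) (g : E → ℝ) :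
    ∫ y in s, g (T y) ∂μ = ∫ y in s, g y ∂μ := by
  conv_rhs => rw [← hs]
  exact ((T.measurePreserving_of_image_eq μ h0 htop hs).setIntegral_image_emb
    T.toContinuousAffineEquiv.toHomeomorph.measurableEmbedding g s).symm

theorem AffineEquiv.integrableOn_comp_of_image_eq (T : E ≃ᵃ[ℝ] E) {s : Set E} (h0 : μ s ≠ 0)
    (htop : μ s ≠ ⊤) (hs : T '' s = s) {g : E → ℝ} (hg : IntegrableOn g s μ) :
    IntegrableOn (fun y => g (T y)) s μ := by
  rw [← hs] at hg
  exact ((T.measurePreserving_of_image_eq μ h0 htop hs).integrableOn_image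
    T.toContinuousAffineEquiv.toHomeomorph.measurableEmbedding).mp hg

end Haar

namespace AffineBasis

variable {ι E : Type*} [NormedAddCommGroup E] [NormedSpace ℝ E] (b : AffineBasis ι ℝ E)

theorem isCompact_convexHull [Finite ι] : IsCompact (convexHull ℝ (Set.range b)) :=
  (Set.finite_range b).isCompact_convexHull (𝕜 := ℝ)

theorem measurableSet_convexHull [Finite ι] [MeasurableSpace E] [BorelSpace E] :
    MeasurableSet (convexHull ℝ (Set.range b)) :=
  b.isCompact_convexHull.isClosed.measurableSet

variable [MeasurableSpace E] [FiniteDimensional ℝ E] (μ : Measure E) [μ.IsAddHaarMeasure]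

theorem measure_convexHull_pos : 0 < μ (convexHull ℝ (Set.range b)) :=
  Measure.measure_pos_of_nonempty_interior _
    (interior_convexHull_nonempty_iff_affineSpan_eq_top.mpr b.tot)

variable [Fintype ι] [BorelSpace E]

theorem integrableOn_coord (i : ι) : IntegrableOn (b.coord i) (convexHull ℝ (Set.range b)) μ :=
  (b.coord i).continuous_of_finiteDimensional.continuousOn.integrableOn_compact
    b.isCompact_convexHull

theorem setIntegral_comp_permEquiv (σ : Equiv.Perm ι) (g : E → ℝ) :
    ∫ y in convexHull ℝ (Set.range b), g (b.permEquiv σ y) ∂μ =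
      ∫ y in convexHull ℝ (Set.range b), g y ∂μ :=
  (b.permEquiv σ).setIntegral_comp_of_image_eq μ (b.measure_convexHull_pos μ).ne'
    b.isCompact_convexHull.measure_lt_top.ne (b.image_permEquiv_convexHull σ) g

theorem integrableOn_comp_permEquiv (σ : Equiv.Perm ι) {g : E → ℝ}
    (hg : IntegrableOn g (convexHull ℝ (Set.range b)) μ) :
    IntegrableOn (fun y => g (b.permEquiv σ y)) (convexHull ℝ (Set.range b)) μ :=
  (b.permEquiv σ).integrableOn_comp_of_image_eq μ (b.measure_convexHull_pos μ).ne'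
    b.isCompact_convexHull.measure_lt_top.ne (b.image_permEquiv_convexHull σ) hg

theorem setIntegral_coord (i : ι) :
    ∫ y in convexHull ℝ (Set.range b), b.coord i y ∂μ =
      μ.real (convexHull ℝ (Set.range b)) / Fintype.card ι := by
  classical
  have := b.nonempty
  have hsymm : ∀ j, ∫ y in convexHull ℝ (Set.range b), b.coord j y ∂μ =
      ∫ y in convexHull ℝ (Set.range b), b.coord i y ∂μ := fun j => by
    rw [← b.setIntegral_comp_permEquiv μ (Equiv.swap i j) (b.coord i)]
    simp only [coord_permEquiv, Equiv.symm_swap, Equiv.swap_apply_left]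
  have hsum : ∑ j, ∫ y in convexHull ℝ (Set.range b), b.coord j y ∂μ =
      μ.real (convexHull ℝ (Set.range b)) := by
    rw [← integral_finsetSum _ fun j _ => b.integrableOn_coord μ j]
    simp only [sum_coord_apply_eq_one, setIntegral_const, smul_eq_mul, mul_one]
  simp only [hsymm, sum_const, card_univ, nsmul_eq_mul] at hsum
  rw [← hsum, mul_div_cancel_left₀ _ (Nat.cast_ne_zero.mpr Fintype.card_ne_zero)]

theorem setIntegral_le_of_convexOn {f : E → ℝ}
    (hf : ConvexOn ℝ (convexHull ℝ (Set.range b)) f)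
    (hint : IntegrableOn f (convexHull ℝ (Set.range b)) μ) :
    ∫ y in convexHull ℝ (Set.range b), f y ∂μ ≤
      μ.real (convexHull ℝ (Set.range b)) / Fintype.card ι * ∑ i, f (b i) := by
  have hint_coord : ∀ i, IntegrableOn (fun y => b.coord i y * f (b i))
      (convexHull ℝ (Set.range b)) μ := fun i => (b.integrableOn_coord μ i).mul_const _
  calc ∫ y in convexHull ℝ (Set.range b), f y ∂μ
      ≤ ∫ y in convexHull ℝ (Set.range b), ∑ i, b.coord i y * f (b i) ∂μ :=
        setIntegral_mono_on hint (integrable_finsetSum _ fun i _ => hint_coord i)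
          b.measurableSet_convexHull fun y hy => b.le_sum_coord_mul_of_convexOn hf hy
    _ = μ.real (convexHull ℝ (Set.range b)) / Fintype.card ι * ∑ i, f (b i) := by
        rw [integral_finsetSum _ fun i _ => hint_coord i, mul_sum]
        simp only [integral_mul_const, setIntegral_coord]

theorem le_setIntegral_of_convexOn [AddGroup ι] {f : E → ℝ}
    (hf : ConvexOn ℝ (convexHull ℝ (Set.range b)) f)
    (hint : IntegrableOn f (convexHull ℝ (Set.range b)) μ) :
    μ.real (convexHull ℝ (Set.range b)) * f ((Fintype.card ι : ℝ)⁻¹ • ∑ i, b i) ≤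
      ∫ y in convexHull ℝ (Set.range b), f y ∂μ := by
  have := b.nonempty
  have hn : (Fintype.card ι : ℝ) ≠ 0 := Nat.cast_ne_zero.mpr Fintype.card_ne_zero
  have hint_orbit : ∀ i, IntegrableOn (fun y => (Fintype.card ι : ℝ)⁻¹ *
      f (b.permEquiv (Equiv.addLeft i) y)) (convexHull ℝ (Set.range b)) μ := fun i =>
    (b.integrableOn_comp_permEquiv μ _ hint).const_mul _
  have hjensen : ∀ y ∈ convexHull ℝ (Set.range b), f ((Fintype.card ι : ℝ)⁻¹ • ∑ i, b i) ≤
      ∑ i, (Fintype.card ι : ℝ)⁻¹ * f (b.permEquiv (Equiv.addLeft i) y) := fun y hy => by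
    rw [← b.sum_permEquiv_addLeft y, smul_sum]
    refine hf.map_sum_le (fun _ _ => by positivity) ?_ fun i _ => ?_
    · rw [sum_const, card_univ, nsmul_eq_mul, mul_inv_cancel₀ hn]
    · rw [← b.image_permEquiv_convexHull (Equiv.addLeft i)]
      exact Set.mem_image_of_mem _ hy
  calc μ.real (convexHull ℝ (Set.range b)) * f ((Fintype.card ι : ℝ)⁻¹ • ∑ i, b i)
      = ∫ _ in convexHull ℝ (Set.range b), f ((Fintype.card ι : ℝ)⁻¹ • ∑ i, b i) ∂μ := by
        rw [setIntegral_const, smul_eq_mul]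
    _ ≤ ∫ y in convexHull ℝ (Set.range b),
          ∑ i, (Fintype.card ι : ℝ)⁻¹ * f (b.permEquiv (Equiv.addLeft i) y) ∂μ :=
        setIntegral_mono_on (integrableOn_const b.isCompact_convexHull.measure_lt_top.ne)
          (integrable_finsetSum _ fun i _ => hint_orbit i) b.measurableSet_convexHull hjensen
    _ = ∫ y in convexHull ℝ (Set.range b), f y ∂μ := by
        rw [integral_finsetSum _ fun i _ => hint_orbit i]
        simp only [integral_const_mul, setIntegral_comp_permEquiv, sum_const, card_univ,
          nsmul_eq_mul, ← mul_assoc, mul_inv_cancel₀ hn, one_mul]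

end AffineBasis

/-- Hermite–Hadamard inequality on a simplex: for a convex integrable function on a
nondegenerate simplex `S ⊂ ℝ^d` with vertices `x 0, …, x d`, the value at the barycenter
is at most the average of `f` over `S`, which is at most the average of the vertex values. -/
theorem hermite_hadamard_simplex (d : ℕ) (x : Fin (d + 1) → (Fin d → ℝ))
    (hx : AffineIndependent ℝ x)
    (S : Set (Fin d → ℝ)) (hS : S = convexHull ℝ (Set.range x))
    (f : (Fin d → ℝ) → ℝ) (hf : ConvexOn ℝ S f)
    (hint : IntegrableOn f S volume) :
    f ((1 / ((d : ℝ) + 1)) • ∑ i, x i) ≤ (1 / (volume S).toReal) * ∫ y in S, f y ∧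
    (1 / (volume S).toReal) * ∫ y in S, f y ≤ (1 / ((d : ℝ) + 1)) * ∑ i, f (x i) := by
  subst hS
  obtain ⟨b, rfl⟩ : ∃ b : AffineBasis (Fin (d + 1)) ℝ (Fin d → ℝ), ⇑b = x :=
    ⟨⟨x, hx, hx.affineSpan_eq_top_iff_card_eq_finrank_add_one.mpr (by simp)⟩, rfl⟩
  have hvol : 0 < volume.real (convexHull ℝ (Set.range b)) :=
    ENNReal.toReal_pos (b.measure_convexHull_pos volume).ne'
      b.isCompact_convexHull.measure_lt_top.ne
  have hcard : (Fintype.card (Fin (d + 1)) : ℝ) = d + 1 := by simp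
  have hleft := b.le_setIntegral_of_convexOn volume hf hint
  have hright := b.setIntegral_le_of_convexOn volume hf hint
  rw [hcard] at hleft hright
  rw [← measureReal_def, one_div_mul_eq_div, one_div]
  constructor
  · refine (le_div_iff₀ hvol).mpr ?_
    rwa [mul_comm]
  · refine (div_le_iff₀ hvol).mpr (hright.trans_eq ?_)
    field_simp
end

section
/- If the point set P = {x_1,…,x_n} ⊂ [0,1]^d has NNLD and the point set Q = {y_1,…,y_m} ⊂ [0,1]^e has NNLD, then the Cartesian product point set {(x_i, y_j) : 1 ≤ i ≤ n, 1 ≤ j ≤ m} ⊂ [0,1]^{d+e} has NNLD. -/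
open Finset

/-- A finite point set `p : ι → κ → ℝ` in `[0,1]^κ` has nonnegative local discrepancy
(NNLD): for every anchored box `[0,a)` with `a ∈ [0,1]^κ` the fraction of points in the
box is at least its volume. -/
def NNLD {ι κ : Type*} [Fintype ι] [Fintype κ] (p : ι → κ → ℝ) : Prop :=
  ∀ a : κ → ℝ, (∀ j, a j ∈ Set.Icc (0 : ℝ) 1) →
    ∏ j, a j ≤ ((Finset.univ.filter fun i => ∀ j, p i j < a j).card : ℝ) / Fintype.card ι

/-- The Cartesian product of two NNLD point sets has NNLD. -/
theorem nnld_product (n m d e : ℕ) (hn : 1 ≤ n) (hm : 1 ≤ m)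
    (x : Fin n → Fin d → ℝ) (y : Fin m → Fin e → ℝ)
    (hx : ∀ i j, x i j ∈ Set.Icc (0 : ℝ) 1) (hy : ∀ i j, y i j ∈ Set.Icc (0 : ℝ) 1)
    (hxN : NNLD x) (hyN : NNLD y) :
    NNLD (fun (ij : Fin n × Fin m) => Sum.elim (x ij.1) (y ij.2)) := by
  intro a ha
  have h1 := hxN (fun j => a (Sum.inl j)) (fun j => ha _)
  have h2 := hyN (fun j => a (Sum.inr j)) (fun j => ha _)
  have hprod : ∏ j, a j = (∏ j, a (Sum.inl j)) * ∏ j, a (Sum.inr j) := by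
    rw [← Fintype.prod_sum_type]
  have hfilter :
      (Finset.univ.filter fun ij : Fin n × Fin m =>
          ∀ j, Sum.elim (x ij.1) (y ij.2) j < a j) =
        (Finset.univ.filter fun i => ∀ j, x i j < a (Sum.inl j)) ×ˢ
        (Finset.univ.filter fun i => ∀ j, y i j < a (Sum.inr j)) := by
    ext ij
    simp [Sum.forall, and_comm]
  rw [hprod, hfilter, Finset.card_product]
  push_cast
  rw [Fintype.card_prod, Fintype.card_fin, Fintype.card_fin]
  push_cast
  rw [← div_mul_div_comm]
  have c1 : (0:ℝ) ≤ ∏ j, a (Sum.inl j) :=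
    Finset.prod_nonneg fun j _ => (ha _).1
  have c2 : (0:ℝ) ≤ (((Finset.univ.filter fun i => ∀ j, y i j < a (Sum.inr j)).card : ℝ)) / m := by
    positivity
  calc (∏ j, a (Sum.inl j)) * ∏ j, a (Sum.inr j)
      ≤ (∏ j, a (Sum.inl j)) *
        (((Finset.univ.filter fun i => ∀ j, y i j < a (Sum.inr j)).card : ℝ) / m) := by
        apply mul_le_mul_of_nonneg_left _ c1
        simp only [Fintype.card_fin] at h2
        refine le_of_le_of_eq h2 ?_
        congr 1
        norm_cast
        exact Finset.card_bij (fun a _ => a) (by simp_all) (by simp) (by simp_all)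
    _ ≤ _ := by
        apply mul_le_mul_of_nonneg_right _ c2
        simp only [Fintype.card_fin] at h1
        refine le_of_le_of_eq h1 ?_
        congr 1
        norm_cast
        exact Finset.card_bij (fun a _ => a) (by simp_all) (by simp) (by simp_all)
end

section
/- Let f : [0,1]^d → ℝ have the form f(x) = f(0) + λ·ν([0,x]) where λ ≥ 0 and ν is a probability measure on [0,1]^d. If the points 1 − x_1, …, 1 − x_n ∈ [0,1]^d have nonnegative local discrepancy, then (1/n)·Σ_{i=1}^{n} f(x_i) ≥ ∫_{[0,1]^d} f(x) dx. -/
/-!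
By Fubini, `∫_{[0,1]^d} ν([0,y]) dy = ∫ vol([a,1]) dν(a) = ∫ ∏ⱼ (1 - aⱼ) dν(a)`. Nonnegative local
discrepancy of the reflected points at the box `[0, 1 - a)` bounds `∏ⱼ (1 - aⱼ)` by the fraction of
points `xᵢ ≥ a`, and the `ν`-integral of that fraction is the average of `ν([0,xᵢ])`. As `f` is
`f 0` plus a nonnegative multiple of `ν([0,·])` on the cube, the inequality passes to `f`.
-/

open MeasureTheory Finset
open scoped ENNReal

section

variable {ι : Type*} [Countable ι]

lemma measurableSet_setOf_snd_mem_Icc_zero_fst :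
    MeasurableSet {p : (ι → ℝ) × (ι → ℝ) | p.2 ∈ Set.Icc 0 p.1} :=
  ((isClosed_le continuous_const continuous_snd).inter
    (isClosed_le continuous_snd continuous_fst)).measurableSet

lemma measurable_measure_Icc_zero (ν : Measure (ι → ℝ)) [SFinite ν] :
    Measurable fun y : ι → ℝ => ν (Set.Icc 0 y) :=
  measurable_measure_prodMk_left measurableSet_setOf_snd_mem_Icc_zero_fst

lemma setLIntegral_measure_Icc_zero (μ ν : Measure (ι → ℝ)) [SFinite μ] [SFinite ν]
    (s : Set (ι → ℝ)) :
    ∫⁻ y in s, ν (Set.Icc 0 y) ∂μ = ∫⁻ a in Set.Ici 0, μ (s ∩ Set.Ici a) ∂ν := by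
  have hS := measurableSet_setOf_snd_mem_Icc_zero_fst (ι := ι)
  calc ∫⁻ y in s, ν (Set.Icc 0 y) ∂μ = (μ.restrict s).prod ν _ := (Measure.prod_apply hS).symm
    _ = ∫⁻ a, μ.restrict s {y | a ∈ Set.Icc 0 y} ∂ν := Measure.prod_apply_symm hS
    _ = ∫⁻ a in Set.Ici 0, μ (s ∩ Set.Ici a) ∂ν := by
      rw [← lintegral_indicator measurableSet_Ici]
      refine lintegral_congr fun a => ?_
      by_cases ha : 0 ≤ a
      · have hslice : {y | a ∈ Set.Icc 0 y} = Set.Ici a := by ext y; simp [ha]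
        rw [Set.indicator_of_mem ha, hslice, Measure.restrict_apply measurableSet_Ici,
          Set.inter_comm]
      · simp [ha]

end

lemma setLIntegral_unitCube_measure_Icc_zero {ι : Type*} [Fintype ι] (ν : Measure (ι → ℝ))
    [SFinite ν] :
    ∫⁻ y in Set.Icc 0 1, ν (Set.Icc 0 y) =
      ∫⁻ a in Set.Ici 0, ∏ j, ENNReal.ofReal (1 - a j) ∂ν := by
  rw [setLIntegral_measure_Icc_zero]
  refine setLIntegral_congr_fun measurableSet_Ici fun a (ha : 0 ≤ a) => ?_
  have hbox : Set.Icc 0 1 ∩ Set.Ici a = Set.Icc a 1 := by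
    ext y
    exact ⟨fun ⟨⟨_, hy1⟩, hay⟩ => ⟨hay, hy1⟩, fun ⟨hay, hy1⟩ => ⟨⟨ha.trans hay, hy1⟩, hay⟩⟩
  rw [hbox, Real.volume_Icc_pi]
  simp

/-- Membership of `p i` in `[0, a)` is tested by the upper bounds only, as the points of interest
lie in `[0,1]^d`. -/
def HasNNLD {ι : Type*} [Fintype ι] {n : ℕ} (p : Fin n → ι → ℝ) : Prop :=
  ∀ a : ι → ℝ, (∀ j, a j ∈ Set.Icc (0 : ℝ) 1) → ∏ j, a j ≤ (#{i | ∀ j, p i j < a j} : ℝ) / n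

namespace HasNNLD

variable {ι : Type*} [Fintype ι] {n : ℕ} {x : Fin n → ι → ℝ}

open Classical in
lemma prod_one_sub_le (h : HasNNLD (1 - x)) {a : ι → ℝ} (ha : a ∈ Set.Icc 0 1) :
    ∏ j, (1 - a j) ≤ (#{i | a ≤ x i} : ℝ) / n := by
  refine (h (1 - a) fun j => ⟨by simpa using ha.2 j, by simpa using ha.1 j⟩).trans ?_
  gcongr
  intro hi j
  exact ((sub_lt_sub_iff_left 1).1 (hi j)).le

open Classical in
lemma prod_ofReal_one_sub_le (h : HasNNLD (1 - x)) (hn : 0 < n) {a : ι → ℝ} (ha : 0 ≤ a) :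
    ∏ j, ENNReal.ofReal (1 - a j) ≤ (n : ℝ≥0∞)⁻¹ * ∑ i, (Set.Icc 0 (x i)).indicator 1 a := by
  have hsum : ∑ i, (Set.Icc 0 (x i)).indicator (1 : (ι → ℝ) → ℝ≥0∞) a = #{i | a ≤ x i} := by
    simp [Set.indicator_apply, ha, Finset.sum_boole]
  by_cases ha1 : a ≤ 1
  · rw [hsum, ← ENNReal.ofReal_prod_of_nonneg (f := fun j => 1 - a j)
      fun j _ => sub_nonneg.2 (ha1 j)]
    calc ENNReal.ofReal (∏ j, (1 - a j)) ≤ ENNReal.ofReal ((#{i | a ≤ x i} : ℝ) / n) :=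
          ENNReal.ofReal_le_ofReal (h.prod_one_sub_le ⟨ha, ha1⟩)
      _ = (n : ℝ≥0∞)⁻¹ * #{i | a ≤ x i} := by
          rw [ENNReal.ofReal_div_of_pos (by exact_mod_cast hn), ENNReal.ofReal_natCast,
            ENNReal.ofReal_natCast, ENNReal.div_eq_inv_mul]
  · obtain ⟨j, hj⟩ : ∃ j, 1 < a j := by simpa [Pi.le_def] using ha1
    rw [Finset.prod_eq_zero (Finset.mem_univ j) (ENNReal.ofReal_eq_zero.2 (by linarith))]
    exact zero_le

lemma setLIntegral_unitCube_measure_Icc_zero_le (h : HasNNLD (1 - x)) (hn : 0 < n)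
    (ν : Measure (ι → ℝ)) [SFinite ν] :
    ∫⁻ y in Set.Icc 0 1, ν (Set.Icc 0 y) ≤ (n : ℝ≥0∞)⁻¹ * ∑ i, ν (Set.Icc 0 (x i)) :=
  calc ∫⁻ y in Set.Icc 0 1, ν (Set.Icc 0 y)
      = ∫⁻ a in Set.Ici 0, ∏ j, ENNReal.ofReal (1 - a j) ∂ν :=
        setLIntegral_unitCube_measure_Icc_zero ν
    _ ≤ ∫⁻ a in Set.Ici 0, (n : ℝ≥0∞)⁻¹ * ∑ i, (Set.Icc 0 (x i)).indicator 1 a ∂ν :=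
        setLIntegral_mono' measurableSet_Ici fun _ ha => h.prod_ofReal_one_sub_le hn ha
    _ ≤ ∫⁻ a, (n : ℝ≥0∞)⁻¹ * ∑ i, (Set.Icc 0 (x i)).indicator 1 a ∂ν :=
        setLIntegral_le_lintegral _ _
    _ = (n : ℝ≥0∞)⁻¹ * ∑ i, ν (Set.Icc 0 (x i)) := by
        rw [lintegral_const_mul _ (Finset.measurable_sum _ fun i _ =>
          measurable_one.indicator measurableSet_Icc), lintegral_finsetSum _ fun i _ =>
          measurable_one.indicator measurableSet_Icc]
        simp_rw [lintegral_indicator_one measurableSet_Icc]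

lemma setIntegral_unitCube_measure_Icc_zero_le (h : HasNNLD (1 - x)) (hn : 0 < n)
    (ν : Measure (ι → ℝ)) [IsFiniteMeasure ν] :
    ∫ y in Set.Icc 0 1, (ν (Set.Icc 0 y)).toReal ≤
      (1 / n : ℝ) * ∑ i, (ν (Set.Icc 0 (x i))).toReal := by
  rw [integral_toReal (measurable_measure_Icc_zero ν).aemeasurable
    (ae_of_all _ fun _ => measure_lt_top _ _)]
  have hfinite : (n : ℝ≥0∞)⁻¹ * ∑ i, ν (Set.Icc 0 (x i)) ≠ ∞ :=
    ENNReal.mul_ne_top (ENNReal.inv_ne_top.2 (by exact_mod_cast hn.ne'))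
      (ENNReal.sum_ne_top.2 fun i _ => measure_ne_top _ _)
  calc _ ≤ ((n : ℝ≥0∞)⁻¹ * ∑ i, ν (Set.Icc 0 (x i))).toReal :=
        ENNReal.toReal_mono hfinite (h.setLIntegral_unitCube_measure_Icc_zero_le hn ν)
    _ = _ := by
        rw [ENNReal.toReal_mul, ENNReal.toReal_inv, ENNReal.toReal_natCast,
          ENNReal.toReal_sum fun i _ => measure_ne_top _ _, one_div]

end HasNNLD

lemma integrable_toReal_measure_Icc_zero {ι : Type*} [Countable ι] (ν : Measure (ι → ℝ))
    [IsFiniteMeasure ν] (μ : Measure (ι → ℝ)) [IsFiniteMeasure μ] :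
    Integrable (fun y => (ν (Set.Icc 0 y)).toReal) μ :=
  .of_bound (measurable_measure_Icc_zero ν).ennreal_toReal.aestronglyMeasurable (ν .univ).toReal
    (ae_of_all _ fun _ => by
      rw [Real.norm_of_nonneg ENNReal.toReal_nonneg]
      exact ENNReal.toReal_mono (measure_ne_top _ _) (measure_mono (Set.subset_univ _)))

theorem nnld_upper_bound_complete_monotone_general (d n : ℕ) (hn : 1 ≤ n)
    (f : (Fin d → ℝ) → ℝ) (l : ℝ) (hl : 0 ≤ l)
    (ν : Measure (Fin d → ℝ)) [IsProbabilityMeasure ν]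
    (hf : ∀ x ∈ Set.Icc (0 : Fin d → ℝ) 1,
      f x = f 0 + l * (ν (Set.Icc (0 : Fin d → ℝ) x)).toReal)
    (x : Fin n → Fin d → ℝ) (hx : ∀ i j, x i j ∈ Set.Icc (0 : ℝ) 1)
    (hNNLD : ∀ a : Fin d → ℝ, (∀ j, a j ∈ Set.Icc (0 : ℝ) 1) →
      ∏ j, a j ≤
        ((Finset.univ.filter fun i => ∀ j, 1 - x i j < a j).card : ℝ) / n) :
    ∫ y in Set.Icc (0 : Fin d → ℝ) 1, f y ∂volume ≤ (1 / (n : ℝ)) * ∑ i, f (x i) := by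
  have hreflected : HasNNLD (1 - x) := fun a ha => by
    simpa only [Pi.sub_apply, Pi.one_apply] using hNNLD a ha
  have : IsProbabilityMeasure (volume.restrict (Set.Icc (0 : Fin d → ℝ) 1)) :=
    ⟨by simp [Real.volume_Icc_pi]⟩
  have hint : ∫ y in Set.Icc 0 1, f y =
      f 0 + l * ∫ y in Set.Icc 0 1, (ν (Set.Icc 0 y)).toReal := by
    rw [setIntegral_congr_fun measurableSet_Icc hf, integral_add (integrable_const _)
      ((integrable_toReal_measure_Icc_zero ν _).const_mul l), integral_const_mul]
    simp
  have havg : (1 / n : ℝ) * ∑ i, f (x i) =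
      f 0 + l * ((1 / n : ℝ) * ∑ i, (ν (Set.Icc 0 (x i))).toReal) := by
    rw [Finset.sum_congr rfl fun i _ => hf (x i) ⟨fun j => (hx i j).1, fun j => (hx i j).2⟩,
      Finset.sum_add_distrib, ← Finset.mul_sum, Finset.sum_const, Finset.card_univ,
      Fintype.card_fin, nsmul_eq_mul]
    field_simp
  rw [hint, havg]
  gcongr
  exact hreflected.setIntegral_unitCube_measure_Icc_zero_le hn ν

/-- If `f(x) = f(0) + λ·ν([0,x])` for a probability measure `ν` on `[0,1]^d` and `λ ≥ 0`
(i.e. `f` is right-continuous completely monotone), and the reflected points `1 - x i`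
have nonnegative local discrepancy, then the QMC average of `f` over the points `x i`
is an upper bound for the integral of `f` over `[0,1]^d`. -/
theorem nnld_upper_bound_complete_monotone (d n : ℕ) (hn : 1 ≤ n)
    (f : (Fin d → ℝ) → ℝ) (l : ℝ) (hl : 0 ≤ l)
    (ν : Measure (Fin d → ℝ)) [IsProbabilityMeasure ν]
    (hνcube : ν (Set.Icc (0 : Fin d → ℝ) 1) = 1)
    (hf : ∀ x ∈ Set.Icc (0 : Fin d → ℝ) 1,
      f x = f 0 + l * (ν (Set.Icc (0 : Fin d → ℝ) x)).toReal)
    (x : Fin n → Fin d → ℝ) (hx : ∀ i j, x i j ∈ Set.Icc (0 : ℝ) 1)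
    (hNNLD : ∀ a : Fin d → ℝ, (∀ j, a j ∈ Set.Icc (0 : ℝ) 1) →
      ∏ j, a j ≤
        ((Finset.univ.filter fun i => ∀ j, 1 - x i j < a j).card : ℝ) / n) :
    ∫ y in Set.Icc (0 : Fin d → ℝ) 1, f y ∂volume ≤ (1 / (n : ℝ)) * ∑ i, f (x i) :=
  nnld_upper_bound_complete_monotone_general d n hn f l hl ν hf x hx hNNLD
end

section
/- Let f : [0,1]^d → ℝ have the form f(x) = f(0) + λ·ν([0,x]) where λ ≥ 0 and ν is a probability measure on [0,1]^d that is absolutely continuous with respect to Lebesgue measure. If x_1, …, x_n ∈ [0,1]^d have nonpositive local discrepancy, then (1/n)·Σ_{i=1}^{n} f(1 − x_i) ≤ ∫_{[0,1]^d} f(x) dx. -/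
open MeasureTheory Finset

open scoped ENNReal

/-!
On the cube both sides are affine, with slope `λ ≥ 0`, in `S = Σ_i ν([0, 1 - x_i])` and
`I = ∫_{[0,1]^d} ν([0, y]) dy` respectively, so it suffices to show `S ≤ n I`. By Fubini,
`I = ∫ vol([a, 1]) dν(a) = ∫ Π_j (1 - a_j) dν(a)`, while `S = ∫ #{i | a ≤ 1 - x_i} dν(a)`.
As `ν ≪ Lebesgue`, `ν`-almost every `a` avoids the hyperplanes `a_j = 1 - x_ij`; for such `a` the
closed-box count equals the half-open one `#{i | x_i < 1 - a}`, which nonpositive local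
discrepancy at the point `1 - a` bounds by `n Π_j (1 - a_j)`.
-/

section

variable {ι : Type*} [Fintype ι]

theorem measurable_measure_Icc (μ : Measure (ι → ℝ)) [SFinite μ] (b : ι → ℝ) :
    Measurable fun y => μ (Set.Icc b y) :=
  measurable_measure_prodMk_right ((measurableSet_le measurable_const measurable_fst).inter
    (measurableSet_le measurable_fst measurable_snd) :
      MeasurableSet {p : (ι → ℝ) × (ι → ℝ) | b ≤ p.1 ∧ p.1 ≤ p.2})

/-- Both sides are the `μ ⊗ volume`-measure of `{(a, y) | b ≤ a ≤ y ≤ c}`. -/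
theorem setLIntegral_measure_Icc (μ : Measure (ι → ℝ)) [SFinite μ] (b c : ι → ℝ) :
    ∫⁻ y in Set.Icc b c, μ (Set.Icc b y) = ∫⁻ a in Set.Icc b c, volume (Set.Icc a c) ∂μ := by
  set s := {p : (ι → ℝ) × (ι → ℝ) | b ≤ p.1 ∧ p.1 ≤ p.2 ∧ p.2 ≤ c}
  have hs : MeasurableSet s :=
    (measurableSet_le measurable_const measurable_fst).inter
      ((measurableSet_le measurable_fst measurable_snd).inter
        (measurableSet_le measurable_snd measurable_const))
  have hleft (y : ι → ℝ) : μ ((fun a => (a, y)) ⁻¹' s) =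
      (Set.Icc b c).indicator (fun y => μ (Set.Icc b y)) y := by
    by_cases hy : y ∈ Set.Icc b c
    · rw [Set.indicator_of_mem hy]
      congr 1
      ext a
      simp only [s, Set.mem_preimage, Set.mem_Icc]
      exact ⟨fun h => ⟨h.1, h.2.1⟩, fun h => ⟨h.1, h.2, hy.2⟩⟩
    · rw [Set.indicator_of_notMem hy, ← measure_empty (μ := μ)]
      congr 1
      ext a
      simp only [s, Set.mem_preimage, Set.mem_Icc] at hy ⊢
      exact iff_of_false (fun h => hy ⟨h.1.trans h.2.1, h.2.2⟩) id
  have hright (a : ι → ℝ) : volume (Prod.mk a ⁻¹' s) =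
      (Set.Icc b c).indicator (fun a => volume (Set.Icc a c)) a := by
    by_cases ha : a ∈ Set.Icc b c
    · rw [Set.indicator_of_mem ha]
      congr 1
      ext y
      simp only [s, Set.mem_preimage, Set.mem_Icc]
      exact ⟨fun h => h.2, fun h => ⟨ha.1, h⟩⟩
    · rw [Set.indicator_of_notMem ha, ← measure_empty (μ := (volume : Measure (ι → ℝ)))]
      congr 1
      ext y
      simp only [s, Set.mem_preimage, Set.mem_Icc] at ha ⊢
      exact iff_of_false (fun h => ha ⟨h.1, h.2.1.trans h.2.2⟩) id
  calc ∫⁻ y in Set.Icc b c, μ (Set.Icc b y) = ∫⁻ y, μ ((fun a => (a, y)) ⁻¹' s) := by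
        simp only [hleft, lintegral_indicator measurableSet_Icc]
    _ = (μ.prod volume) s := (Measure.prod_apply_symm hs).symm
    _ = ∫⁻ a, volume (Prod.mk a ⁻¹' s) ∂μ := Measure.prod_apply hs
    _ = ∫⁻ a in Set.Icc b c, volume (Set.Icc a c) ∂μ := by
        simp only [hright, lintegral_indicator measurableSet_Icc]

theorem ae_forall_ne_of_absolutelyContinuous {κ : Type*} [Countable κ] {μ : Measure (ι → ℝ)}
    (hμ : μ ≪ volume) (c : κ → ι → ℝ) : ∀ᵐ a ∂μ, ∀ k j, a j ≠ c k j := by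
  simp only [ae_all_iff]
  intro k j
  refine hμ.ae_le (measure_eq_zero_iff_ae_notMem.mp ?_)
  rw [volume_pi]
  exact Measure.pi_hyperplane (fun _ : ι => (volume : Measure ℝ)) j (c k j)

theorem sum_indicator_Icc_one_sub_le {n : ℕ} (hn : 0 < n) {x : Fin n → ι → ℝ} {a : ι → ℝ}
    (ha : a ∈ Set.Icc 0 1) (hax : ∀ i j, a j ≠ 1 - x i j)
    (hδ : (#{i | ∀ j, x i j < 1 - a j} : ℝ) / n ≤ ∏ j, (1 - a j)) :
    ∑ i, (Set.Icc 0 (1 - x i)).indicator 1 a ≤ n * volume (Set.Icc a 1) := by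
  have hmem (i : Fin n) : a ∈ Set.Icc 0 (1 - x i) ↔ ∀ j, x i j < 1 - a j := by
    refine (and_iff_right ha.1).trans (forall_congr' fun j => ?_)
    rw [Pi.sub_apply, Pi.one_apply, (hax i j).le_iff_lt]
    exact lt_sub_comm
  calc ∑ i, (Set.Icc 0 (1 - x i)).indicator 1 a = (#{i | ∀ j, x i j < 1 - a j} : ℝ≥0∞) := by
        classical
        simp only [Set.indicator_apply, hmem, Pi.one_apply, sum_boole]
    _ = ENNReal.ofReal (#{i | ∀ j, x i j < 1 - a j} : ℝ) := (ENNReal.ofReal_natCast _).symm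
    _ ≤ ENNReal.ofReal (n * ∏ j, (1 - a j)) :=
        ENNReal.ofReal_le_ofReal (by rwa [div_le_iff₀' (by exact_mod_cast hn)] at hδ)
    _ = n * volume (Set.Icc a 1) := by
        have h1a (j : ι) : 0 ≤ 1 - a j := sub_nonneg.mpr (ha.2 j)
        rw [Real.volume_Icc_pi, ENNReal.ofReal_mul (Nat.cast_nonneg n), ENNReal.ofReal_natCast,
          ENNReal.ofReal_prod_of_nonneg fun j _ => h1a j]
        rfl

theorem sum_measure_Icc_one_sub_le {n : ℕ} (hn : 0 < n) {μ : Measure (ι → ℝ)} [SFinite μ]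
    (hμ : μ ≪ volume) {x : Fin n → ι → ℝ} (hx : ∀ i, 0 ≤ x i)
    (hNPLD : ∀ a : ι → ℝ, (∀ j, a j ∈ Set.Icc (0 : ℝ) 1) →
      (#{i | ∀ j, x i j < a j} : ℝ) / n ≤ ∏ j, a j) :
    ∑ i, μ (Set.Icc 0 (1 - x i)) ≤ n * ∫⁻ y in Set.Icc 0 1, μ (Set.Icc 0 y) := by
  calc ∑ i, μ (Set.Icc 0 (1 - x i)) = ∫⁻ a, ∑ i, (Set.Icc 0 (1 - x i)).indicator 1 a ∂μ := by
        rw [lintegral_finsetSum _ fun i _ => measurable_one.indicator measurableSet_Icc]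
        simp only [lintegral_indicator_one measurableSet_Icc]
    _ ≤ ∫⁻ a, (Set.Icc 0 1).indicator (fun a => n * volume (Set.Icc a 1)) a ∂μ := by
        refine lintegral_mono_ae ?_
        filter_upwards [ae_forall_ne_of_absolutelyContinuous hμ fun i => 1 - x i] with a hax
        by_cases ha : a ∈ Set.Icc 0 1
        · rw [Set.indicator_of_mem ha]
          exact sum_indicator_Icc_one_sub_le hn ha hax
            (hNPLD _ fun j => ⟨sub_nonneg.2 (ha.2 j), sub_le_self _ (ha.1 j)⟩)
        · have hnot (i : Fin n) : a ∉ Set.Icc 0 (1 - x i) :=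
            fun h => ha ⟨h.1, h.2.trans (sub_le_self _ (hx i))⟩
          simp [Set.indicator_of_notMem, hnot, ha]
    _ = n * ∫⁻ y in Set.Icc 0 1, μ (Set.Icc 0 y) := by
        rw [lintegral_indicator measurableSet_Icc,
          lintegral_const_mul' _ _ (ENNReal.natCast_ne_top n), setLIntegral_measure_Icc]

theorem setLIntegral_measure_Icc_lt_top (μ : Measure (ι → ℝ)) [IsFiniteMeasure μ] (b c : ι → ℝ) :
    ∫⁻ y in Set.Icc b c, μ (Set.Icc b y) < ∞ :=
  calc ∫⁻ y in Set.Icc b c, μ (Set.Icc b y) ≤ ∫⁻ _ in Set.Icc b c, μ Set.univ :=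
        lintegral_mono fun _ => measure_mono (Set.subset_univ _)
    _ = μ Set.univ * volume (Set.Icc b c) := setLIntegral_const _ _
    _ < ∞ := ENNReal.mul_lt_top (measure_lt_top _ _) isCompact_Icc.measure_lt_top

theorem setIntegral_unitCube_of_eq_add_mul_measure_Icc (ν : Measure (ι → ℝ)) [IsFiniteMeasure ν]
    {f : (ι → ℝ) → ℝ} {c l : ℝ}
    (hf : ∀ y ∈ Set.Icc (0 : ι → ℝ) 1, f y = c + l * (ν (Set.Icc 0 y)).toReal) :
    ∫ y in Set.Icc (0 : ι → ℝ) 1, f y = c + l * (∫⁻ y in Set.Icc 0 1, ν (Set.Icc 0 y)).toReal := by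
  have hvol : volume (Set.Icc (0 : ι → ℝ) 1) = 1 := by simp [Real.volume_Icc_pi]
  have : IsFiniteMeasure (volume.restrict (Set.Icc (0 : ι → ℝ) 1)) :=
    isFiniteMeasure_restrict.2 (by simp [hvol])
  have hmeas := (measurable_measure_Icc ν 0).aemeasurable (μ := volume.restrict (Set.Icc 0 1))
  rw [setIntegral_congr_fun measurableSet_Icc hf, integral_add (integrable_const c)
    ((integrable_toReal_of_lintegral_ne_top hmeas
      (setLIntegral_measure_Icc_lt_top ν 0 1).ne).const_mul l),
    integral_const, integral_const_mul,
    integral_toReal hmeas (ae_of_all _ fun _ => measure_lt_top _ _)]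
  simp [measureReal_def, hvol]

end

theorem npld_lower_bound_complete_monotone_general (d n : ℕ) (hn : 1 ≤ n)
    (f : (Fin d → ℝ) → ℝ) (l : ℝ) (hl : 0 ≤ l)
    (ν : Measure (Fin d → ℝ)) [IsProbabilityMeasure ν]
    (hνac : ν ≪ volume)
    (hf : ∀ x ∈ Set.Icc (0 : Fin d → ℝ) 1,
      f x = f 0 + l * (ν (Set.Icc (0 : Fin d → ℝ) x)).toReal)
    (x : Fin n → Fin d → ℝ) (hx : ∀ i j, x i j ∈ Set.Icc (0 : ℝ) 1)
    (hNPLD : ∀ a : Fin d → ℝ, (∀ j, a j ∈ Set.Icc (0 : ℝ) 1) →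
      ((Finset.univ.filter fun i => ∀ j, x i j < a j).card : ℝ) / n ≤ ∏ j, a j) :
    (1 / (n : ℝ)) * ∑ i, f (fun j => 1 - x i j) ≤
      ∫ y in Set.Icc (0 : Fin d → ℝ) 1, f y ∂volume := by
  set I := ∫⁻ y in Set.Icc 0 1, ν (Set.Icc 0 y)
  set S := ∑ i, ν (Set.Icc 0 (1 - x i))
  have hn' : (0 : ℝ) < n := by exact_mod_cast hn
  have hSI : S.toReal / n ≤ I.toReal := by
    rw [div_le_iff₀' hn']
    simpa using ENNReal.toReal_mono (by finiteness [(setLIntegral_measure_Icc_lt_top ν 0 1).ne])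
      (sum_measure_Icc_one_sub_le hn hνac (fun i j => (hx i j).1) fun a ha => by
        -- the `Decidable` instances of the two filters differ
        convert hNPLD a ha)
  have hsum : ∑ i, f (1 - x i) = n * f 0 + l * S.toReal := by
    have hmem (i : Fin n) : 1 - x i ∈ Set.Icc 0 1 :=
      ⟨fun j => sub_nonneg.2 (hx i j).2, fun j => sub_le_self _ (hx i j).1⟩
    rw [sum_congr rfl fun i _ => hf _ (hmem i), sum_add_distrib, sum_const, card_univ,
      Fintype.card_fin, nsmul_eq_mul, ← mul_sum, ENNReal.toReal_sum fun i _ => measure_ne_top _ _]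
  calc 1 / (n : ℝ) * ∑ i, f (1 - x i) = f 0 + l * (S.toReal / n) := by
        rw [hsum]
        field_simp
    _ ≤ f 0 + l * I.toReal := by gcongr
    _ = ∫ y in Set.Icc 0 1, f y := (setIntegral_unitCube_of_eq_add_mul_measure_Icc ν hf).symm

/-- If `f(x) = f(0) + λ·ν([0,x])` for a probability measure `ν` on `[0,1]^d` that is
absolutely continuous with respect to Lebesgue measure and `λ ≥ 0`, and the points
`x i` have nonpositive local discrepancy, then the QMC average of `f` over the
reflected points `1 - x i` is a lower bound for the integral of `f` over `[0,1]^d`. -/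
theorem npld_lower_bound_complete_monotone (d n : ℕ) (hn : 1 ≤ n)
    (f : (Fin d → ℝ) → ℝ) (l : ℝ) (hl : 0 ≤ l)
    (ν : Measure (Fin d → ℝ)) [IsProbabilityMeasure ν]
    (hνcube : ν (Set.Icc (0 : Fin d → ℝ) 1) = 1)
    (hνac : ν ≪ volume)
    (hf : ∀ x ∈ Set.Icc (0 : Fin d → ℝ) 1,
      f x = f 0 + l * (ν (Set.Icc (0 : Fin d → ℝ) x)).toReal)
    (x : Fin n → Fin d → ℝ) (hx : ∀ i j, x i j ∈ Set.Icc (0 : ℝ) 1)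
    (hNPLD : ∀ a : Fin d → ℝ, (∀ j, a j ∈ Set.Icc (0 : ℝ) 1) →
      ((Finset.univ.filter fun i => ∀ j, x i j < a j).card : ℝ) / n ≤ ∏ j, a j) :
    (1 / (n : ℝ)) * ∑ i, f (fun j => 1 - x i j) ≤
      ∫ y in Set.Icc (0 : Fin d → ℝ) 1, f y ∂volume :=
  npld_lower_bound_complete_monotone_general d n hn f l hl ν hνac hf x hx hNPLD
end

section
/- Fix n ≥ 2 and real values y_1, …, y_n with at least two distinct values. Consider the t-statistic t(y_1) = √n·Ȳ/s as a function of the first observation with the others fixed. Then t(y_1) → 1 as y_1 → +∞ and t(y_1) → −1 as y_1 → −∞. -/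
open Finset Filter

private lemma t_aux (n : ℕ) (hn : 2 ≤ n) (w : Fin n → ℝ) (i0 : Fin n) :
    Tendsto (fun c : ℝ =>
        (Real.sqrt n * ((1 / (n : ℝ)) * ∑ i, Function.update w i0 c i)) /
          Real.sqrt ((1 / ((n : ℝ) - 1)) *
            ∑ i, (Function.update w i0 c i -
              (1 / (n : ℝ)) * ∑ j, Function.update w i0 c j) ^ 2))
      atTop (nhds 1) ∧
    Tendsto (fun c : ℝ =>
        (Real.sqrt n * ((1 / (n : ℝ)) * ∑ i, Function.update w i0 c i)) /
          Real.sqrt ((1 / ((n : ℝ) - 1)) *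
            ∑ i, (Function.update w i0 c i -
              (1 / (n : ℝ)) * ∑ j, Function.update w i0 c j) ^ 2))
      atBot (nhds (-1)) := by
  have hn2 : (2:ℝ) ≤ (n:ℝ) := by exact_mod_cast hn
  have hnpos : (0:ℝ) < n := by linarith
  have hn0 : (n:ℝ) ≠ 0 := ne_of_gt hnpos
  have hn1 : (n:ℝ) - 1 ≠ 0 := by intro h; nlinarith
  set K1 : ℝ := ∑ i ∈ Finset.univ \ {i0}, w i with hK1
  set K2 : ℝ := ∑ i ∈ Finset.univ \ {i0}, (w i)^2 with hK2
  set q : ℝ := -2*K1/((n:ℝ)*((n:ℝ)-1)) with hq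
  set r : ℝ := (K2 - K1^2/(n:ℝ))/((n:ℝ)-1) with hr
  have hcard : (((Finset.univ \ {i0} : Finset (Fin n))).card : ℝ) = (n:ℝ) - 1 := by
    rw [Finset.card_sdiff_of_subset (by simp)]
    simp [Finset.card_univ]
    rw [Nat.cast_sub (by omega)]
    simp
  have hsum : ∀ c : ℝ, ∑ i, Function.update w i0 c i = c + K1 := fun c =>
    Finset.sum_update_of_mem (Finset.mem_univ i0) w c
  have hupd : ∀ c m : ℝ, ∑ i ∈ Finset.univ \ {i0}, (Function.update w i0 c i - m)^2
      = ∑ i ∈ Finset.univ \ {i0}, ((w i) - m)^2 := fun c m =>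
    Finset.sum_congr rfl fun i hi => by
      rw [Function.update_of_ne (by simpa using (Finset.mem_sdiff.mp hi).2)]
  have hexp : ∀ m : ℝ, ∑ i ∈ Finset.univ \ {i0}, ((w i) - m)^2
      = K2 - 2*m*K1 + ((n:ℝ)-1)*m^2 := by
    intro m
    have h1 : ∀ i ∈ Finset.univ \ {i0}, ((w i) - m)^2 = (w i)^2 - 2*m*(w i) + m^2 :=
      fun i _ => by ring
    rw [Finset.sum_congr rfl h1, Finset.sum_add_distrib, Finset.sum_sub_distrib,
      ← Finset.mul_sum, Finset.sum_const, nsmul_eq_mul, hcard]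
  have hV : ∀ c : ℝ, (1 / ((n : ℝ) - 1)) *
      ∑ i, (Function.update w i0 c i -
        (1 / (n : ℝ)) * ∑ j, Function.update w i0 c j) ^ 2
      = c^2/(n:ℝ) + q*c + r := by
    intro c
    rw [hsum c, Finset.sum_eq_sum_sdiff_singleton_add (Finset.mem_univ i0),
      Function.update_self, hupd, hexp, hq, hr]
    field_simp
    ring
  clear_value K1 K2 q r
  simp only [hV]
  simp only [hsum]
  -- the rescaled function
  have hsqrtn : (0:ℝ) < Real.sqrt n := Real.sqrt_pos.mpr hnpos
  have hval : Real.sqrt n / n / Real.sqrt (1/(n:ℝ)) = 1 := by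
    rw [one_div, Real.sqrt_inv, div_inv_eq_mul,
      div_mul_eq_mul_div, Real.mul_self_sqrt hnpos.le, div_self hn0]
  have hden_ne : Real.sqrt (1/(n:ℝ)) ≠ 0 := by
    rw [Real.sqrt_ne_zero' ]
    positivity
  have hnum : Tendsto (fun u : ℝ => Real.sqrt n / n * (1 + K1*u)) (nhds 0)
      (nhds (Real.sqrt n / n)) :=
    Continuous.tendsto' (by fun_prop) 0 _ (by norm_num)
  have hden : Tendsto (fun u : ℝ => Real.sqrt (1/(n:ℝ) + q*u + r*u^2)) (nhds 0)
      (nhds (Real.sqrt (1/(n:ℝ)))) :=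
    Continuous.tendsto' (by fun_prop) 0 _ (by norm_num)
  have hlim : Tendsto (fun u : ℝ => (Real.sqrt n / n * (1 + K1*u)) /
      Real.sqrt (1/(n:ℝ) + q*u + r*u^2)) (nhds 0) (nhds 1) := by
    have h := hnum.div hden hden_ne
    rwa [hval] at h
  have hX : ∀ c : ℝ, c ≠ 0 → c^2/(n:ℝ) + q*c + r
      = c^2 * (1/(n:ℝ) + q*c⁻¹ + r*(c⁻¹)^2) := by
    intro c hc
    field_simp
  have hN : ∀ c : ℝ, c ≠ 0 → Real.sqrt n * (1/(n:ℝ) * (c + K1))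
      = (Real.sqrt n / n * (1 + K1*c⁻¹)) * c := by
    intro c hc
    field_simp
  have hinvbot : Tendsto (fun c : ℝ => c⁻¹) atBot (nhds (0:ℝ)) := by
    have h1 : Tendsto (fun c : ℝ => -c) atBot atTop := tendsto_neg_atBot_atTop
    have h := ((tendsto_inv_atTop_zero (𝕜 := ℝ)).comp h1).neg
    rw [neg_zero] at h
    refine h.congr fun c => ?_
    simp only [Function.comp_apply, inv_neg, neg_neg]
  constructor
  · refine Tendsto.congr' ?_ (hlim.comp tendsto_inv_atTop_zero)
    filter_upwards [eventually_gt_atTop 0] with c hc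
    simp only [Function.comp_apply]
    rw [hX c hc.ne', Real.sqrt_mul (sq_nonneg c), Real.sqrt_sq hc.le, hN c hc.ne',
      mul_comm c (Real.sqrt _), mul_div_mul_right _ _ hc.ne']
  · refine Tendsto.congr' ?_ ((hlim.comp hinvbot).neg)
    filter_upwards [eventually_lt_atBot 0] with c hc
    simp only [Function.comp_apply]
    rw [hX c hc.ne, Real.sqrt_mul (sq_nonneg c), Real.sqrt_sq_eq_abs, abs_of_neg hc,
      hN c hc.ne]
    rw [show -c * Real.sqrt (1/(n:ℝ) + q*c⁻¹ + r*(c⁻¹)^2)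
        = -Real.sqrt (1/(n:ℝ) + q*c⁻¹ + r*(c⁻¹)^2) * c by ring,
      mul_div_mul_right _ _ hc.ne, div_neg]

/-- Sending one observation to `±∞` drives the t-statistic to `±1`: with the other
observations fixed (having at least two distinct values), the t-statistic viewed as a
function of the first observation tends to `1` as it tends to `+∞` and to `-1` as it
tends to `-∞`. -/
theorem t_statistic_one_outlier (n : ℕ) (hn : 2 ≤ n) (z : Fin n → ℝ)
    (hz : ∃ i j, z i ≠ z j) :
    Tendsto (fun c : ℝ =>
        (Real.sqrt n * ((1 / (n : ℝ)) * ∑ i, Function.update z ⟨0, by omega⟩ c i)) /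
          Real.sqrt ((1 / ((n : ℝ) - 1)) *
            ∑ i, (Function.update z ⟨0, by omega⟩ c i -
              (1 / (n : ℝ)) * ∑ j, Function.update z ⟨0, by omega⟩ c j) ^ 2))
      atTop (nhds 1) ∧
    Tendsto (fun c : ℝ =>
        (Real.sqrt n * ((1 / (n : ℝ)) * ∑ i, Function.update z ⟨0, by omega⟩ c i)) /
          Real.sqrt ((1 / ((n : ℝ) - 1)) *
            ∑ i, (Function.update z ⟨0, by omega⟩ c i -
              (1 / (n : ℝ)) * ∑ j, Function.update z ⟨0, by omega⟩ c j) ^ 2))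
      atBot (nhds (-1)) := by
  exact t_aux n hn z ⟨0, by omega⟩
end
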